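/- arXiv:2508.20041 — 2 statements merged into one kernel-verified Lean document; each statement's English description precedes it below -/
import Mathlib

section
/- Let α ∈ [0,1) be real, m ≥ 1 an integer, and ĉ a real with ĉ ≥ (2m)^{1/(1−α)}. Then ĉ·(2/m) − 2·(2ĉ)^α ≥ (4 − 2·2^α)·(2m)^{α/(1−α)} ≥ 2. -/
/-!
Put `b = 1 / (1 - α) ≥ 1`. Since `2 ^ α = 2 * 2 ^ (-b⁻¹)` and
`2 ^ (α / (1 - α)) = 2 ^ b / 2`, the lower bound `2` amounts to
`2 ^ (-b) + 2 ^ (-b⁻¹) ≤ 1`. This is tight at `b = 1` to first order, so it needs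
second-order Taylor bounds for `exp` (expanded around `b = 1` on `[1, 2]`, and with
`2 ^ b ≥ 4 (1 + (b - 2) log 2)` on `[2, ∞)`).

For the first bound, `c ≥ M ^ (1 / (1 - α))` with `M = 2m` gives `c ^ (1 - α) ≥ M`, hence
`2 (2c) ^ α ≤ 2 * 2 ^ α * c / M`, and the left side is at least
`(4 - 2 * 2 ^ α) c / M ≥ (4 - 2 * 2 ^ α) M ^ (α / (1 - α))`.
-/

open Real

lemma exp_neg_le_one_sub_add_sq_div_two {w : ℝ} (hw : 0 ≤ w) :
    exp (-w) ≤ 1 - w + w ^ 2 / 2 := by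
  have hq := quadratic_le_exp_of_nonneg hw
  have hprod : exp (-w) * exp w = 1 := by rw [← exp_add, neg_add_cancel, exp_zero]
  -- `(1 - w + w² / 2) * (1 + w + w² / 2) = 1 + w⁴ / 4`
  nlinarith [exp_pos (-w), pow_nonneg hw 4]

lemma exp_le_one_add_add_sq_div_two_add_cube {z : ℝ} (h0 : 0 ≤ z) (h1 : z ≤ 1) :
    exp z ≤ 1 + z + z ^ 2 / 2 + 2 / 9 * z ^ 3 := by
  have h := exp_bound' h0 h1 (n := 3) (by norm_num)
  norm_num [Finset.sum_range_succ, Nat.factorial] at h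
  linarith

lemma cubic_le_sq_of_le_two {b L : ℝ} (hb1 : 1 ≤ b) (hb2 : b ≤ 2) (hL0 : 0 ≤ L)
    (hL : L ≤ 0.7) : L * b * (b ^ 2 + 1) / 2 + 2 / 9 * L ^ 2 * (b - 1) ≤ b ^ 2 := by
  nlinarith [mul_nonneg (sub_nonneg.2 hb1) (sub_nonneg.2 hb2),
    mul_nonneg (sub_nonneg.2 hL) (by positivity : (0:ℝ) ≤ b * (b ^ 2 + 1)),
    mul_nonneg (sub_nonneg.2 hb1) (mul_nonneg hL0 (sub_nonneg.2 hL))]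

lemma two_rpow_neg_add_two_rpow_neg_inv_le_one_of_le_two {b : ℝ} (hb1 : 1 ≤ b) (hb2 : b ≤ 2) :
    (2:ℝ) ^ (-b) + (2:ℝ) ^ (-b⁻¹) ≤ 1 := by
  have hb0 : 0 < b := by linarith
  have hL0 : 0 < log 2 := log_pos one_lt_two
  have hL1 : log 2 < 0.7 := log_two_lt_d9.trans (by norm_num)
  set w := log 2 * (b - 1) with hw
  set z := w / b with hz
  have hw0 : 0 ≤ w := by positivity
  have hz0 : 0 ≤ z := by positivity
  have hz1 : z ≤ 1 := by rw [hz, div_le_one hb0]; nlinarith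
  have h2b : (2:ℝ) ^ (-b) = exp (-w) / 2 := by
    rw [rpow_def_of_pos two_pos, show log 2 * -b = -w - log 2 by ring, exp_sub, exp_log two_pos]
  have h2b' : (2:ℝ) ^ (-b⁻¹) = exp z / 2 := by
    have hexponent : log 2 * -b⁻¹ = z - log 2 := by rw [hz, hw]; field_simp; ring
    rw [rpow_def_of_pos two_pos, hexponent, exp_sub, exp_log two_pos]
  have hpoly : z - w + (w ^ 2 + z ^ 2) / 2 + 2 / 9 * z ^ 3 ≤ 0 := by
    have hfactor : (z - w + (w ^ 2 + z ^ 2) / 2 + 2 / 9 * z ^ 3) * b ^ 3 =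
        -(log 2 * (b - 1) ^ 2) * (b ^ 2 - (log 2 * b * (b ^ 2 + 1) / 2
          + 2 / 9 * log 2 ^ 2 * (b - 1))) := by
      rw [hz, hw]; field_simp; ring
    refine nonpos_of_mul_nonpos_left ?_ (pow_pos hb0 3)
    rw [hfactor]
    exact mul_nonpos_of_nonpos_of_nonneg (by nlinarith [sq_nonneg (b - 1)])
      (sub_nonneg.2 (cubic_le_sq_of_le_two hb1 hb2 hL0.le hL1.le))
  rw [h2b, h2b']
  linarith [exp_neg_le_one_sub_add_sq_div_two hw0, exp_le_one_add_add_sq_div_two_add_cube hz0 hz1]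

lemma two_mul_sq_le_of_two_le {b L : ℝ} (hb : 2 ≤ b) (hL0 : 0.69 ≤ L) (hL1 : L ≤ 0.7) :
    2 * b ^ 2 ≤ 4 * (1 + L * (b - 2)) * (L * (2 * b - L)) := by
  nlinarith [mul_nonneg (sub_nonneg.2 hb) (sub_nonneg.2 hb),
    mul_nonneg (sub_nonneg.2 hb) (sub_nonneg.2 hL0),
    mul_nonneg (sub_nonneg.2 hL0) (sub_nonneg.2 hL1),
    mul_nonneg (mul_nonneg (sub_nonneg.2 hb) (sub_nonneg.2 hb)) (sub_nonneg.2 hL0)]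

lemma two_rpow_neg_add_two_rpow_neg_inv_le_one_of_two_le {b : ℝ} (hb : 2 ≤ b) :
    (2:ℝ) ^ (-b) + (2:ℝ) ^ (-b⁻¹) ≤ 1 := by
  have hb0 : 0 < b := by linarith
  have hL0 : 0.69 ≤ log 2 := log_two_gt_d9.le.trans' (by norm_num)
  have hL1 : log 2 ≤ 0.7 := log_two_lt_d9.le.trans (by norm_num)
  set w := log 2 / b with hw
  have hw0 : 0 ≤ w := by positivity
  have h2b' : (2:ℝ) ^ (-b⁻¹) = exp (-w) := by
    rw [rpow_def_of_pos two_pos, hw]; ring_nf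
  have h2b : 4 * (1 + log 2 * (b - 2)) ≤ (2:ℝ) ^ b := by
    rw [show b = 2 + (b - 2) by ring, rpow_add two_pos, rpow_def_of_pos two_pos (b - 2)]
    norm_num
    nlinarith [add_one_le_exp (log 2 * (b - 2))]
  have h2b_inv : (2:ℝ) ^ (-b) ≤ w - w ^ 2 / 2 := by
    rw [rpow_neg zero_le_two, inv_le_iff_one_le_mul₀' (rpow_pos_of_pos two_pos b),
      show w - w ^ 2 / 2 = log 2 * (2 * b - log 2) / (2 * b ^ 2) by rw [hw]; field_simp,
      mul_div_assoc', le_div_iff₀ (by positivity), one_mul]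
    nlinarith [two_mul_sq_le_of_two_le hb hL0 hL1, mul_le_mul_of_nonneg_right h2b
      (by nlinarith : 0 ≤ log 2 * (2 * b - log 2))]
  rw [h2b']
  linarith [exp_neg_le_one_sub_add_sq_div_two hw0]

lemma two_rpow_neg_add_two_rpow_neg_inv_le_one {b : ℝ} (hb : 1 ≤ b) :
    (2:ℝ) ^ (-b) + (2:ℝ) ^ (-b⁻¹) ≤ 1 := by
  rcases le_total b 2 with hb2 | hb2
  · exact two_rpow_neg_add_two_rpow_neg_inv_le_one_of_le_two hb hb2
  · exact two_rpow_neg_add_two_rpow_neg_inv_le_one_of_two_le hb2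

lemma one_le_two_sub_two_rpow_mul_two_rpow_div_one_sub {α : ℝ} (hα0 : 0 ≤ α)
    (hα1 : α < 1) :
    1 ≤ (2 - (2:ℝ) ^ α) * (2:ℝ) ^ (α / (1 - α)) := by
  have h1α : 0 < 1 - α := by linarith
  have hcore := two_rpow_neg_add_two_rpow_neg_inv_le_one
    (one_le_inv₀ h1α |>.2 (by linarith))
  rw [inv_inv] at hcore
  have hy : 0 < (2:ℝ) ^ (α / (1 - α)) := rpow_pos_of_pos two_pos _
  have h2α : (2:ℝ) ^ α = 2 * 2 ^ (-(1 - α)) := by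
    calc (2:ℝ) ^ α = 2 ^ ((1:ℝ) + -(1 - α)) := by ring_nf
      _ = 2 * 2 ^ (-(1 - α)) := by rw [rpow_add two_pos, rpow_one]
  have h2inv : (2:ℝ) ^ (-(1 - α)⁻¹) * (2 * 2 ^ (α / (1 - α))) = 1 := by
    rw [← rpow_one_add' zero_le_two (by positivity), ← rpow_add two_pos,
      show -(1 - α)⁻¹ + (1 + α / (1 - α)) = 0 by field_simp; ring, rpow_zero]
  nlinarith

lemma le_rpow_one_sub_of_rpow_one_div_one_sub_le {M c α : ℝ} (hM : 0 ≤ M) (hα1 : α < 1)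
    (hc : M ^ (1 / (1 - α)) ≤ c) : M ≤ c ^ (1 - α) := by
  calc M = (M ^ (1 / (1 - α))) ^ (1 - α) := by
        rw [one_div, rpow_inv_rpow hM (by linarith)]
    _ ≤ c ^ (1 - α) := rpow_le_rpow (by positivity) hc (by linarith)

lemma mul_rpow_le_of_le_rpow_one_sub {M c α : ℝ} (hc : 0 < c)
    (hMc : M ≤ c ^ (1 - α)) : M * c ^ α ≤ c := by
  calc M * c ^ α ≤ c ^ (1 - α) * c ^ α := by gcongr
    _ = c := by rw [← rpow_add hc, sub_add_cancel, rpow_one]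

theorem merge_cost_bound (α : ℝ) (hα0 : 0 ≤ α) (hα1 : α < 1)
    (m : ℕ) (hm : 1 ≤ m) (c : ℝ)
    (hc : ((2 * m : ℝ)) ^ (1 / (1 - α)) ≤ c) :
    c * (2 / m) - 2 * (2 * c) ^ α ≥ (4 - 2 * 2 ^ α) * ((2 * m : ℝ)) ^ (α / (1 - α)) ∧
    (4 - 2 * 2 ^ α) * ((2 * m : ℝ)) ^ (α / (1 - α)) ≥ 2 := by
  set M : ℝ := 2 * m with hMdef
  have hM : 2 ≤ M := by rw [hMdef]; norm_cast; omega
  have hkey := one_le_two_sub_two_rpow_mul_two_rpow_div_one_sub hα0 hα1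
  have hβ : (2:ℝ) ^ (α / (1 - α)) ≤ M ^ (α / (1 - α)) :=
    rpow_le_rpow zero_le_two hM (div_nonneg hα0 (by linarith))
  have hcoef : 0 < 2 - (2:ℝ) ^ α := by
    by_contra! h
    nlinarith [rpow_pos_of_pos two_pos (α / (1 - α))]
  have hc0 : 0 < c := (rpow_pos_of_pos (by linarith) _).trans_le hc
  have hcα : M * c ^ α ≤ c := mul_rpow_le_of_le_rpow_one_sub hc0
    (le_rpow_one_sub_of_rpow_one_div_one_sub_le (by linarith) hα1 hc)
  have h1α : 1 - α ≠ 0 := by linarith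
  have hMβ : M ^ (α / (1 - α)) * M = M ^ (1 / (1 - α)) := by
    rw [← rpow_add_one (by positivity), show α / (1 - α) + 1 = 1 / (1 - α) by field_simp; ring]
  refine ⟨?_, by nlinarith⟩
  rw [mul_rpow zero_le_two hc0.le, show c * (2 / m) = 4 * c / M by rw [hMdef]; field_simp; ring]
  calc (4 - 2 * 2 ^ α) * M ^ (α / (1 - α))
      = (4 - 2 * 2 ^ α) * M ^ (1 / (1 - α)) / M := by rw [← hMβ]; field_simp
    _ ≤ (4 - 2 * 2 ^ α) * c / M := by gcongr; linarith
    _ ≤ (4 * c - 2 * 2 ^ α * (M * c ^ α)) / M := by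
        gcongr; nlinarith [mul_le_mul_of_nonneg_left hcα (rpow_pos_of_pos two_pos α).le]
    _ = 4 * c / M - 2 * (2 ^ α * c ^ α) := by field_simp
end

section
/- Let a, b be integers with 7 ≤ a ≤ b, and let d_t, d_a, d_b be nonnegative reals with d_a ≤ 1, d_a + d_b ≥ √2, and d_a + d_t ≥ 1 (triangle-type constraints from a layout where two source groups A, B at distance at least √2 share a Steiner vertex at distance at most 1 from A). Then for every α ∈ [0,1): (a+b)^α·d_t + a·d_a + b·d_b − a^α − b^α ≥ min(1, √2·a + (d_b + d_t) − 2, a·(d_a + d_t − 1) + b·(d_b + d_t − 1)). -/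
open Real

set_option maxHeartbeats 1000000 in
theorem cost_difference_bound (a b : ℕ) (ha : 7 ≤ a) (hab : a ≤ b)
    (dt da db : ℝ) (hdt : 0 ≤ dt) (hda0 : 0 ≤ da) (hdb : 0 ≤ db)
    (hda1 : da ≤ 1) (hdadb : Real.sqrt 2 ≤ da + db) (hdadt : 1 ≤ da + dt)
    (α : ℝ) (hα0 : 0 ≤ α) (hα1 : α < 1) :
    ((a : ℝ) + b) ^ α * dt + a * da + b * db - (a : ℝ) ^ α - (b : ℝ) ^ α ≥
      min 1 (min (Real.sqrt 2 * a + (db + dt) - 2)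
        ((a : ℝ) * (da + dt - 1) + (b : ℝ) * (db + dt - 1))) := by
  set A : ℝ := (a : ℝ) with hAdef
  set B : ℝ := (b : ℝ) with hBdef
  have hA7 : (7 : ℝ) ≤ A := by simp only [hAdef]; exact_mod_cast ha
  have hAB : A ≤ B := by simp only [hAdef, hBdef]; exact_mod_cast hab
  have hApos : (0 : ℝ) < A := by linarith
  have hB7 : (7 : ℝ) ≤ B := le_trans hA7 hAB
  set S : ℝ := A + B with hSdef
  have hS14 : (14 : ℝ) ≤ S := by rw [hSdef]; linarith
  have hSpos : (0 : ℝ) < S := by linarith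
  have hS1 : (1 : ℝ) < S := by linarith
  set r2 : ℝ := Real.sqrt 2 with hr2def
  set X : ℝ := S ^ α with hXdef
  set Aa : ℝ := A ^ α with hAadef
  set Ba : ℝ := B ^ α with hBadef
  set σ : ℝ := S ^ (α - 1) with hσdef
  set τ : ℝ := A ^ (1 - α) with hτdef
  clear_value τ σ Ba Aa X r2 S B A
  have hr2sq : r2 ^ 2 = 2 := by rw [hr2def]; exact Real.sq_sqrt (by norm_num)
  have hr2pos : (0 : ℝ) < r2 := by rw [hr2def]; exact Real.sqrt_pos.mpr (by norm_num)
  have hr2lb : (1.41 : ℝ) ≤ r2 := by nlinarith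
  have hr2ub : r2 ≤ 1.415 := by nlinarith
  have hXpos : 0 < X := by rw [hXdef]; exact Real.rpow_pos_of_pos hSpos α
  have hσpos : 0 < σ := by rw [hσdef]; exact Real.rpow_pos_of_pos hSpos (α - 1)
  have hAapos : 0 < Aa := by rw [hAadef]; exact Real.rpow_pos_of_pos hApos α
  have hBapos : 0 < Ba := by
    rw [hBadef]; exact Real.rpow_pos_of_pos (lt_of_lt_of_le hApos hAB) α
  have hXSσ : X = S * σ := by
    rw [hXdef, hσdef, show α = 1 + (α - 1) by ring, Real.rpow_add hSpos, Real.rpow_one]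
    ring_nf
  have hXltS : X < S := by
    have := Real.rpow_lt_rpow_of_exponent_lt hS1 hα1
    rw [Real.rpow_one] at this
    rw [hXdef]; exact this
  have hAaleA : Aa ≤ A := by
    have := Real.rpow_le_rpow_of_exponent_le (by linarith : (1:ℝ) ≤ A) (le_of_lt hα1)
    rw [Real.rpow_one] at this
    rw [hAadef]; exact this
  have hBaleB : Ba ≤ B := by
    have := Real.rpow_le_rpow_of_exponent_le (by linarith : (1:ℝ) ≤ B) (le_of_lt hα1)
    rw [Real.rpow_one] at this
    rw [hBadef]; exact this
  have hXS : X / S = σ := by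
    rw [hσdef, Real.rpow_sub hSpos, Real.rpow_one, hXdef]
  -- √2 A ≤ A da + B db
  have hsum : r2 * A ≤ A * da + B * db := by
    have h1 := mul_le_mul_of_nonneg_left hdadb (le_of_lt hApos)
    have h2 := mul_nonneg (sub_nonneg.mpr hAB) hdb
    linarith only [h1, h2]
  -- Bernoulli : Ba ≤ X - α A σ
  have hbern : Ba ≤ X - α * A * σ := by
    have ht1 : A / S ≤ 1 := by rw [div_le_one hSpos]; linarith
    have ht0 : 0 < A / S := div_pos hApos hSpos
    have hberni : (1 + -(A / S)) ^ α ≤ 1 + α * -(A / S) :=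
      rpow_one_add_le_one_add_mul_self (by linarith) hα0 (le_of_lt hα1)
    have hBS : 1 + -(A / S) = B / S := by field_simp; rw [hSdef]; ring
    rw [hBS] at hberni
    have hdiv : (B / S) ^ α = Ba / X := by
      rw [hBadef, hXdef, Real.div_rpow (by linarith) (le_of_lt hSpos)]
    rw [hdiv] at hberni
    have key : Ba ≤ (1 + α * -(A / S)) * X := (div_le_iff₀ hXpos).mp hberni
    have hAXσ : A / S * X = A * σ := by rw [div_mul_eq_mul_div, mul_div_assoc, hXS]
    calc Ba ≤ (1 + α * -(A / S)) * X := key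
      _ = X - α * (A / S * X) := by ring
      _ = X - α * (A * σ) := by rw [hAXσ]
      _ = X - α * A * σ := by ring
  -- σ ≤ A^(α-1)
  have hσle : σ ≤ A ^ (α - 1) := by
    rw [hσdef]
    exact Real.rpow_le_rpow_of_nonpos hApos (by linarith) (by linarith)
  have hAα1pos : 0 < A ^ (α - 1) := Real.rpow_pos_of_pos hApos _
  have hlnA : (1 : ℝ) ≤ Real.log A := by
    rw [Real.le_log_iff_exp_le hApos]
    calc Real.exp 1 ≤ 2.7182818286 := le_of_lt Real.exp_one_lt_d9
      _ ≤ A := by linarith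
  have hτexp : τ = Real.exp (Real.log A * (1 - α)) := by
    rw [hτdef, Real.rpow_def_of_pos hApos]
  have hτge : 1 + (1 - α) * Real.log A ≤ τ := by
    rw [hτexp]
    have h := Real.add_one_le_exp (Real.log A * (1 - α))
    linarith
  -- step a
  have hstepa : (1 - α) * A ≤ (r2 * A - 1) * (τ - 1) := by
    have h1 : (1 - α) * Real.log A ≤ τ - 1 := by linarith only [hτge]
    have h141 : (1.41 : ℝ) * A ≤ r2 * A :=
      mul_le_mul_of_nonneg_right hr2lb (le_of_lt hApos)
    have hA' : A ≤ r2 * A - 1 := by linarith only [h141, hA7]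
    have h3 : A ≤ (r2 * A - 1) * Real.log A := by
      have h4 := mul_le_mul_of_nonneg_left hlnA (by linarith only [hA7, hA'] : (0:ℝ) ≤ r2 * A - 1)
      linarith only [h4, hA']
    calc (1 - α) * A ≤ (1 - α) * ((r2 * A - 1) * Real.log A) :=
          mul_le_mul_of_nonneg_left h3 (by linarith)
      _ = (r2 * A - 1) * ((1 - α) * Real.log A) := by ring
      _ ≤ (r2 * A - 1) * (τ - 1) :=
          mul_le_mul_of_nonneg_left h1 (by linarith only [h141, hA7])
  -- identities
  have hτσ : A ^ (α - 1) * τ = 1 := by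
    rw [hτdef, ← Real.rpow_add hApos]
    norm_num
  have hτAa : A ^ (α - 1) * A = Aa := by
    calc A ^ (α - 1) * A = A ^ (α - 1) * A ^ (1 : ℝ) := by rw [Real.rpow_one]
      _ = A ^ (α - 1 + 1) := (Real.rpow_add hApos _ _).symm
      _ = A ^ α := by norm_num
      _ = Aa := hAadef.symm
  -- step b
  have hstepb : Aa + A ^ (α - 1) * (r2 * A - 1 - α * A) ≤ r2 * A - 1 := by
    have hmul := mul_le_mul_of_nonneg_left hstepa (le_of_lt hAα1pos)
    have hlhs : A ^ (α - 1) * ((1 - α) * A) = Aa - α * Aa := by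
      rw [show A ^ (α - 1) * ((1 - α) * A) = (1 - α) * (A ^ (α - 1) * A) by ring, hτAa]
      ring
    have hrhs : A ^ (α - 1) * ((r2 * A - 1) * (τ - 1))
        = (r2 * A - 1) * (A ^ (α - 1) * τ) - (r2 * A - 1) * A ^ (α - 1) := by ring
    rw [hlhs, hrhs, hτσ] at hmul
    have hαAa : α * A * A ^ (α - 1) = α * Aa := by
      rw [show α * A * A ^ (α - 1) = α * (A ^ (α - 1) * A) by ring, hτAa]
    linarith only [hmul, hαAa]
  -- step d
  have hcoef : 0 ≤ r2 * A - 1 - α * A := by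
    have h141 : (1.41 : ℝ) * A ≤ r2 * A :=
      mul_le_mul_of_nonneg_right hr2lb (le_of_lt hApos)
    have hαA : α * A ≤ 1 * A := mul_le_mul_of_nonneg_right (le_of_lt hα1) (le_of_lt hApos)
    linarith only [h141, hαA, hA7]
  have hstepd : Aa + Ba - X ≤ (r2 * A - 1) * (1 - σ) := by
    have hc := mul_le_mul_of_nonneg_right hσle hcoef
    linarith only [hbern, hstepb, hc]
  -- P
  have hSX : S - X = S * (1 - σ) := by rw [hXSσ]; ring
  have hstepd' : S * (Aa + Ba - X) ≤ (r2 * A - 1) * (S - X) := by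
    calc S * (Aa + Ba - X) ≤ S * ((r2 * A - 1) * (1 - σ)) :=
          mul_le_mul_of_nonneg_left hstepd (le_of_lt hSpos)
      _ = (r2 * A - 1) * (S * (1 - σ)) := by ring
      _ = (r2 * A - 1) * (S - X) := by rw [hSX]
  have hP : S * (1 + Aa + Ba - r2 * A) ≤ X * (S + 1 - r2 * A) := by
    linarith only [hstepd']
  rcases le_or_gt (dt * (S - X)) (S - Aa - Ba) with hcase | hcase
  · -- LHS ≥ third
    rw [hSdef] at hcase
    have h3 : X * dt + A * da + B * db - Aa - Ba
        ≥ A * (da + dt - 1) + B * (db + dt - 1) := by linarith only [hcase]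
    calc min 1 (min (r2 * A + (db + dt) - 2) (A * (da + dt - 1) + B * (db + dt - 1)))
        ≤ min (r2 * A + (db + dt) - 2) (A * (da + dt - 1) + B * (db + dt - 1)) :=
          min_le_right _ _
      _ ≤ A * (da + dt - 1) + B * (db + dt - 1) := min_le_right _ _
      _ ≤ X * dt + A * da + B * db - Aa - Ba := h3
  · -- LHS ≥ 1
    have hXdt : 1 + Aa + Ba - r2 * A ≤ X * dt := by
      have h1 : X * (S - Aa - Ba) ≤ X * (dt * (S - X)) :=
        mul_le_mul_of_nonneg_left (le_of_lt hcase) (le_of_lt hXpos)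
      have h2 : (1 + Aa + Ba - r2 * A) * (S - X) ≤ X * (S - Aa - Ba) := by linarith only [hP]
      have h3 : (1 + Aa + Ba - r2 * A) * (S - X) ≤ (X * dt) * (S - X) := by
        linarith only [h1, h2]
      exact le_of_mul_le_mul_right h3 (by linarith)
    have hge1 : (1 : ℝ) ≤ X * dt + A * da + B * db - Aa - Ba := by linarith
    calc min 1 (min (r2 * A + (db + dt) - 2) (A * (da + dt - 1) + B * (db + dt - 1)))
        ≤ 1 := min_le_left _ _
      _ ≤ X * dt + A * da + B * db - Aa - Ba := hge1
end
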